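/- arXiv:2006.09344 — 2 statements merged into one kernel-verified Lean document; each statement's English description precedes it below -/
import Mathlib

section
/- Any two distinct points of F are separated by Euclidean distance at least c/q² for some absolute constant c > 0 (independent of q and d). -/
/-!
Points of `F` with different `b` are separated by their last coordinates `1/b`: inversion does
not shrink distances on `(0, 1]`, and `B` is a grid of mesh `1/(2q²)` inside `(1/2, 1]`. Points with
the same `b` differ in some coordinate `-m_j/b`; dividing by `b ≤ 1` does not shrink distances
either, and `-A` is a grid of mesh `1/(2q)`.
-/

open Set

/-- `A = arithGrid q (2q) q` and `B = arithGrid q² (2q²) q²` hold definitionally. -/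
def arithGrid (c N : ℝ) (M : ℕ) : Set ℝ :=
  {x | ∃ i : ℕ, 1 ≤ i ∧ i ≤ M ∧ x = (c + i) / N}

section arithGrid

variable {c N x y : ℝ} {M : ℕ}

theorem inv_le_abs_sub_of_mem_arithGrid (hN : 0 < N) (hx : x ∈ arithGrid c N M)
    (hy : y ∈ arithGrid c N M) (hxy : x ≠ y) : N⁻¹ ≤ |x - y| := by
  obtain ⟨i, -, -, rfl⟩ := hx
  obtain ⟨j, -, -, rfl⟩ := hy
  have hij : (i : ℤ) - j ≠ 0 := sub_ne_zero.2 fun h ↦ hxy (by rw [Int.ofNat_inj.1 h])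
  have hsep : (1 : ℝ) ≤ |(i : ℝ) - j| := by exact_mod_cast Int.one_le_abs hij
  rw [← sub_div, add_sub_add_left_eq_sub, abs_div, abs_of_pos hN, inv_eq_one_div]
  exact div_le_div_of_nonneg_right hsep hN.le

theorem mem_Ioc_zero_one_of_mem_arithGrid (hc : 0 ≤ c) (hcM : c + M ≤ N)
    (hx : x ∈ arithGrid c N M) : x ∈ Ioc 0 1 := by
  obtain ⟨i, hi, hiM, rfl⟩ := hx
  have hi' : (1 : ℝ) ≤ i := by exact_mod_cast hi
  have hiM' : (i : ℝ) ≤ M := by exact_mod_cast hiM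
  have hN : 0 < N := by linarith
  exact ⟨by positivity, (div_le_one hN).2 (by linarith)⟩

end arithGrid

theorem abs_sub_le_abs_inv_sub_inv {a b : ℝ} (ha : 0 < a) (hb : 0 < b) (ha1 : a ≤ 1)
    (hb1 : b ≤ 1) : |a - b| ≤ |a⁻¹ - b⁻¹| := by
  rw [inv_sub_inv ha.ne' hb.ne', abs_div, abs_sub_comm, abs_of_pos (mul_pos ha hb)]
  exact le_div_self (abs_nonneg _) (mul_pos ha hb) (mul_le_one₀ ha1 hb.le hb1)

theorem abs_sub_le_abs_div_sub_div {x y b : ℝ} (hb : 0 < b) (hb1 : b ≤ 1) :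
    |x - y| ≤ |x / b - y / b| := by
  rw [← sub_div, abs_div, abs_of_pos hb]
  exact le_div_self (abs_nonneg _) hb hb1

theorem abs_sub_apply_le_norm_sub {ι : Type*} [Fintype ι] (x y : EuclideanSpace ℝ ι) (i : ι) :
    |x i - y i| ≤ ‖x - y‖ := by
  simpa using PiLp.norm_apply_le (x - y) i

/-- Separation of `F`: there is an absolute constant `c > 0` (independent of
`q` and the dimension `d = n+1`) such that any two distinct points of `F` are
at Euclidean distance at least `c/q²`. -/
theorem stmt6 :
    ∃ c : ℝ, 0 < c ∧
      ∀ (q n : ℕ), 1 ≤ q → 1 ≤ n →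
        ∀ (A B : Set ℝ),
          A = {x : ℝ | ∃ i : ℕ, 1 ≤ i ∧ i ≤ q ∧ x = ((q : ℝ) + i) / (2 * q)} →
          B = {x : ℝ | ∃ i : ℕ, 1 ≤ i ∧ i ≤ q ^ 2 ∧ x = ((q : ℝ) ^ 2 + i) / (2 * q ^ 2)} →
          ∀ F : Set (EuclideanSpace ℝ (Fin (n + 1))),
            F = {p | ∃ (m : Fin n → ℝ) (b : ℝ), (∀ j, m j ∈ -A) ∧ b ∈ B ∧
              (∀ j : Fin n, p (Fin.castSucc j) = -(m j) / b) ∧ p (Fin.last n) = 1 / b} →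
            ∀ p p', p ∈ F → p' ∈ F → p ≠ p' → c / (q : ℝ) ^ 2 ≤ ‖p - p'‖ := by
  refine ⟨1 / 2, one_half_pos, ?_⟩
  rintro q n hq - A B rfl rfl F rfl p p' ⟨m, b, hm, hb, hp, hpl⟩ ⟨m', b', hm', hb', hp', hpl'⟩ hne
  have hq : (1 : ℝ) ≤ q := by exact_mod_cast hq
  suffices ∃ i, (2 * (q : ℝ) ^ 2)⁻¹ ≤ |p i - p' i| by
    obtain ⟨i, hi⟩ := this
    calc 1 / 2 / (q : ℝ) ^ 2 = (2 * (q : ℝ) ^ 2)⁻¹ := by ring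
      _ ≤ ‖p - p'‖ := hi.trans (abs_sub_apply_le_norm_sub p p' i)
  have hB : (q : ℝ) ^ 2 + ↑(q ^ 2) ≤ 2 * q ^ 2 := by push_cast; linarith
  obtain ⟨hb0, hb1⟩ := mem_Ioc_zero_one_of_mem_arithGrid (by positivity) hB hb
  obtain ⟨hb0', hb1'⟩ := mem_Ioc_zero_one_of_mem_arithGrid (by positivity) hB hb'
  by_cases hbb : b = b'
  · subst hbb
    obtain ⟨i, hi⟩ : ∃ i, p i ≠ p' i := by
      by_contra! h
      exact hne (PiLp.ext h)
    refine ⟨i, ?_⟩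
    induction i using Fin.lastCases with
    | last => exact absurd (hpl.trans hpl'.symm) hi
    | cast j =>
      rw [hp, hp'] at hi ⊢
      have hA := inv_le_abs_sub_of_mem_arithGrid (by positivity) (hm j) (hm' j)
        fun h ↦ hi (by rw [h])
      refine le_trans ?_ (hA.trans (abs_sub_le_abs_div_sub_div hb0 hb1))
      gcongr
      nlinarith
  · refine ⟨Fin.last n, ?_⟩
    rw [hpl, hpl', one_div, one_div]
    exact (inv_le_abs_sub_of_mem_arithGrid (by positivity) hb hb' hbb).trans
      (abs_sub_le_abs_inv_sub_inv hb0 hb0' hb1 hb1')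
end

section
/- There is a constant C = C(d,s) such that the discrete s-energy of F restricted to pairs agreeing in the first d−1 coordinates satisfies q^{−2d−2} ∑_{(p,p') ∈ 𝓕} |p_d − p'_d|^{−s} ≤ C, where 𝓕 = {(p,p') ∈ F × F : p_j = p'_j for j = 1,...,d−1, p_d ≠ p'_d}. -/
/-!
Two points of `F` with the same first `d - 1` coordinates are determined by their last
coordinates `1 / b`, `b ∈ B`. As `b ↦ 1 / b` does not shrink distances on `(0, 1]`, these last
coordinates, indexed by `i ∈ [1, q²]`, are `1 / (2q²)`-separated, so for each `p ∈ F` the sum over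
its partners is at most `(2q²)^s ∑_{k ≠ 0} |k|^{-s}`. Summing over the `≤ q^{d+1}` points of `F`
and using `q^{2s} ≤ q^{d+1}` gives `O(q^{2d+2})`.
-/

open Finset Pointwise

theorem EuclideanSpace.eq_of_castSucc_eq_of_last_eq {n : ℕ} {x y : EuclideanSpace ℝ (Fin (n + 1))}
    (hinit : ∀ j : Fin n, x (Fin.castSucc j) = y (Fin.castSucc j))
    (hlast : x (Fin.last n) = y (Fin.last n)) : x = y :=
  PiLp.ext fun k => Fin.lastCases hlast hinit k

theorem sum_filter_castSucc_eq_last_ne_le {n : ℕ} (F : Finset (EuclideanSpace ℝ (Fin (n + 1))))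
    {T : Finset ℝ} (hT : ∀ p ∈ F, p (Fin.last n) ∈ T) (f : ℝ → ℝ → ℝ) (hf : ∀ a b, 0 ≤ f a b) :
    ∑ pp ∈ (F ×ˢ F).filter
        (fun pp => (∀ j : Fin n, pp.1 (Fin.castSucc j) = pp.2 (Fin.castSucc j)) ∧
          pp.1 (Fin.last n) ≠ pp.2 (Fin.last n)),
      f (pp.1 (Fin.last n)) (pp.2 (Fin.last n)) ≤
    ∑ p ∈ F, ∑ t ∈ T.erase (p (Fin.last n)), f (p (Fin.last n)) t := by
  set fiber := fun p : EuclideanSpace ℝ (Fin (n + 1)) => F.filter fun p' =>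
    (∀ j : Fin n, p (Fin.castSucc j) = p' (Fin.castSucc j)) ∧ p (Fin.last n) ≠ p' (Fin.last n)
  rw [sum_finset_product _ F fiber (by intro pp; simp [fiber, and_assoc])]
  gcongr with p hp
  have hinj : Set.InjOn (fun p' : EuclideanSpace ℝ (Fin (n + 1)) => p' (Fin.last n)) (fiber p) := by
    intro p₁ h₁ p₂ h₂ hlast
    simp only [fiber, mem_coe, mem_filter] at h₁ h₂
    exact EuclideanSpace.eq_of_castSucc_eq_of_last_eq
      (fun j => (h₁.2.1 j).symm.trans (h₂.2.1 j)) hlast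
  refine (sum_image (f := f (p (Fin.last n))) hinj).symm.trans_le
    (sum_le_sum_of_subset_of_nonneg ?_ fun _ _ _ => hf _ _)
  intro t ht
  obtain ⟨p', hp', rfl⟩ := mem_image.mp ht
  simp only [fiber, mem_filter] at hp'
  exact mem_erase.mpr ⟨hp'.2.2.symm, hT p' hp'.1⟩

theorem sum_erase_abs_sub_rpow_neg_le_tsum {s : ℝ} (hs : 1 < s) (S : Finset ℕ) (i : ℕ) :
    ∑ j ∈ S.erase i, |(i : ℝ) - j| ^ (-s) ≤ ∑' k : ℤ, |(k : ℝ)| ^ (-s) := by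
  have hinj : Set.InjOn (fun j : ℕ => (i : ℤ) - j) (S.erase i) := fun a _ b _ h => by
    simpa using h
  calc ∑ j ∈ S.erase i, |(i : ℝ) - j| ^ (-s)
      = ∑ k ∈ (S.erase i).image (fun j : ℕ => (i : ℤ) - j), |(k : ℝ)| ^ (-s) := by
        rw [sum_image hinj]; push_cast; rfl
    _ ≤ ∑' k : ℤ, |(k : ℝ)| ^ (-s) :=
        (Real.summable_abs_int_rpow hs).sum_le_tsum _ fun _ _ => by positivity

theorem sum_erase_abs_sub_rpow_neg_le_of_separated {s L : ℝ} (hs : 1 < s) (hL : 0 < L)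
    {S : Finset ℕ} {x : ℕ → ℝ} (hsep : ∀ i ∈ S, ∀ j ∈ S, |(i : ℝ) - j| ≤ L * |x i - x j|)
    {i : ℕ} (hi : i ∈ S) :
    ∑ t ∈ (S.image x).erase (x i), |x i - t| ^ (-s) ≤ L ^ s * ∑' k : ℤ, |(k : ℝ)| ^ (-s) := by
  have hsub : (S.image x).erase (x i) ⊆ (S.erase i).image x := by
    intro t ht
    obtain ⟨hti, ht⟩ := mem_erase.mp ht
    obtain ⟨j, hj, rfl⟩ := mem_image.mp ht
    exact mem_image_of_mem x (mem_erase.mpr ⟨fun hji => hti (hji ▸ rfl), hj⟩)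
  have hterm : ∀ j ∈ S.erase i, |x i - x j| ^ (-s) ≤ L ^ s * |(i : ℝ) - j| ^ (-s) := by
    intro j hj
    obtain ⟨hji, hj⟩ := mem_erase.mp hj
    have hij : 0 < |(i : ℝ) - j| := abs_pos.mpr (sub_ne_zero.mpr (by exact_mod_cast hji.symm))
    calc |x i - x j| ^ (-s) ≤ (|(i : ℝ) - j| / L) ^ (-s) :=
          Real.rpow_le_rpow_of_nonpos (div_pos hij hL)
            ((div_le_iff₀' hL).mpr (hsep i hi j hj)) (by linarith)
      _ = L ^ s * |(i : ℝ) - j| ^ (-s) := by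
          rw [Real.div_rpow hij.le hL.le, Real.rpow_neg hL.le, div_eq_mul_inv, inv_inv, mul_comm]
  calc ∑ t ∈ (S.image x).erase (x i), |x i - t| ^ (-s)
      ≤ ∑ t ∈ (S.erase i).image x, |x i - t| ^ (-s) :=
        sum_le_sum_of_subset_of_nonneg hsub fun _ _ _ => by positivity
    _ ≤ ∑ j ∈ S.erase i, |x i - x j| ^ (-s) := sum_image_le_of_nonneg fun _ _ => by positivity
    _ ≤ ∑ j ∈ S.erase i, L ^ s * |(i : ℝ) - j| ^ (-s) := sum_le_sum hterm
    _ ≤ L ^ s * ∑' k : ℤ, |(k : ℝ)| ^ (-s) := by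
        rw [← mul_sum]
        exact mul_le_mul_of_nonneg_left (sum_erase_abs_sub_rpow_neg_le_tsum hs S i)
          (by positivity)

theorem abs_sub_le_abs_inv_sub_inv_s17 {u v : ℝ} (hu : 0 < u) (hu1 : u ≤ 1) (hv : 0 < v)
    (hv1 : v ≤ 1) : |u - v| ≤ |u⁻¹ - v⁻¹| := by
  rw [inv_sub_inv hu.ne' hv.ne', abs_div, abs_sub_comm, abs_of_pos (mul_pos hu hv)]
  exact le_div_self (abs_nonneg _) (mul_pos hu hv) (mul_le_one₀ hu1 hv.le hv1)

theorem abs_sub_le_mul_abs_one_div_sub_one_div {M : ℝ} (hM : 0 < M) {i j : ℕ}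
    (hi : (i : ℝ) ≤ M) (hj : (j : ℝ) ≤ M) :
    |(i : ℝ) - j| ≤ 2 * M * |1 / ((M + i) / (2 * M)) - 1 / ((M + j) / (2 * M))| := by
  have hmem : ∀ k : ℕ, (k : ℝ) ≤ M → 0 < (M + k) / (2 * M) ∧ (M + k) / (2 * M) ≤ 1 :=
    fun k hk => ⟨by positivity, (div_le_one (by positivity)).mpr (by linarith)⟩
  have h2M : 0 < 2 * M := by positivity
  have hdiff : (M + i) / (2 * M) - (M + j) / (2 * M) = (i - j) / (2 * M) := by ring
  calc |(i : ℝ) - j| = 2 * M * |(M + i) / (2 * M) - (M + j) / (2 * M)| := by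
        rw [hdiff, abs_div, abs_of_pos h2M, mul_div_cancel₀ _ h2M.ne']
    _ ≤ 2 * M * |1 / ((M + i) / (2 * M)) - 1 / ((M + j) / (2 * M))| := by
        simp only [one_div]
        exact mul_le_mul_of_nonneg_left (abs_sub_le_abs_inv_sub_inv_s17 (hmem i hi).1 (hmem i hi).2
          (hmem j hj).1 (hmem j hj).2) h2M.le

theorem sum_filter_castSucc_eq_last_ne_rpow_neg_le {n : ℕ} {s L : ℝ} (hs : 1 < s)
    (hL : 0 < L) {S : Finset ℕ} {x : ℕ → ℝ}
    (hsep : ∀ i ∈ S, ∀ j ∈ S, |(i : ℝ) - j| ≤ L * |x i - x j|)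
    (F : Finset (EuclideanSpace ℝ (Fin (n + 1)))) (hF : ∀ p ∈ F, ∃ i ∈ S, p (Fin.last n) = x i) :
    ∑ pp ∈ (F ×ˢ F).filter
        (fun pp => (∀ j : Fin n, pp.1 (Fin.castSucc j) = pp.2 (Fin.castSucc j)) ∧
          pp.1 (Fin.last n) ≠ pp.2 (Fin.last n)),
      |pp.1 (Fin.last n) - pp.2 (Fin.last n)| ^ (-s) ≤
    F.card * (L ^ s * ∑' k : ℤ, |(k : ℝ)| ^ (-s)) := by
  have hT : ∀ p ∈ F, p (Fin.last n) ∈ S.image x := fun p hp => by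
    obtain ⟨i, hi, hpi⟩ := hF p hp
    exact hpi ▸ mem_image_of_mem x hi
  refine (sum_filter_castSucc_eq_last_ne_le F hT (fun a b => |a - b| ^ (-s))
    fun _ _ => by positivity).trans ?_
  rw [← nsmul_eq_mul]
  refine sum_le_card_nsmul _ _ _ fun p hp => ?_
  obtain ⟨i, hi, hpi⟩ := hF p hp
  rw [hpi]
  exact sum_erase_abs_sub_rpow_neg_le_of_separated hs hL hsep hi

theorem two_mul_sq_rpow_le {a s : ℝ} (ha : 1 ≤ a) {k : ℕ} (hsk : 2 * s ≤ k) :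
    (2 * a ^ 2) ^ s ≤ 2 ^ s * a ^ k := by
  rw [Real.mul_rpow (by norm_num) (by positivity), ← Real.rpow_natCast_mul (by linarith),
    ← Real.rpow_natCast a k]
  gcongr
  push_cast
  linarith

noncomputable def liftedGrid (n : ℕ) (A B : Finset ℝ) : Finset (EuclideanSpace ℝ (Fin (n + 1))) :=
  ((Fintype.piFinset fun _ : Fin n => -A) ×ˢ B).image
    (fun mb => WithLp.toLp 2 (Fin.snoc (fun j => -(mb.1 j) / mb.2) (1 / mb.2) : Fin (n + 1) → ℝ))

theorem card_liftedGrid_le (n : ℕ) (A B : Finset ℝ) :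
    (liftedGrid n A B).card ≤ A.card ^ n * B.card :=
  card_image_le.trans_eq <| by
    rw [card_product, Fintype.card_piFinset, prod_const, card_neg, card_univ, Fintype.card_fin]

theorem exists_last_eq_of_mem_liftedGrid {n : ℕ} {A : Finset ℝ} {S : Finset ℕ} {y : ℕ → ℝ}
    {p : EuclideanSpace ℝ (Fin (n + 1))} (hp : p ∈ liftedGrid n A (S.image y)) :
    ∃ i ∈ S, p (Fin.last n) = 1 / y i := by
  obtain ⟨mb, hmb, rfl⟩ := mem_image.mp hp
  obtain ⟨i, hi, hiy⟩ := mem_image.mp (mem_product.mp hmb).2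
  exact ⟨i, hi, by simp [hiy]⟩

theorem stmt17_general (n : ℕ) (s : ℝ) (h1 : 1 < s) (hs2 : s < ((n : ℝ) + 2) / 2) :
    ∃ C : ℝ, 0 < C ∧ ∀ q : ℕ, 1 ≤ q →
      ∀ A B : Finset ℝ,
        A = (Finset.Icc 1 q).image (fun i : ℕ => ((q : ℝ) + i) / (2 * q)) →
        B = (Finset.Icc 1 (q ^ 2)).image (fun i : ℕ => ((q : ℝ) ^ 2 + i) / (2 * (q : ℝ) ^ 2)) →
        ∀ F : Finset (EuclideanSpace ℝ (Fin (n + 1))),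
          F = ((Fintype.piFinset fun _ : Fin n => -A) ×ˢ B).image
              (fun mb => WithLp.toLp 2 (Fin.snoc (fun j => -(mb.1 j) / mb.2) (1 / mb.2) : Fin (n + 1) → ℝ)) →
          (1 / (q : ℝ) ^ (2 * (n + 1) + 2)) *
              ∑ pp ∈ (F ×ˢ F).filter
                  (fun pp => (∀ j : Fin n, pp.1 (Fin.castSucc j) = pp.2 (Fin.castSucc j)) ∧
                    pp.1 (Fin.last n) ≠ pp.2 (Fin.last n)),
                |pp.1 (Fin.last n) - pp.2 (Fin.last n)| ^ (-s) ≤ C := by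
  set Z := ∑' k : ℤ, |(k : ℝ)| ^ (-s)
  have hZ : 0 < Z := (Real.summable_abs_int_rpow h1).tsum_pos (fun _ => by positivity) 1 (by simp)
  refine ⟨2 ^ s * Z, by positivity, ?_⟩
  rintro q hq A B hA hB F hF
  replace hF : F = liftedGrid n A B := hF
  subst hF
  have hq1 : (1 : ℝ) ≤ q := by exact_mod_cast hq
  have hsep : ∀ i ∈ Icc 1 (q ^ 2), ∀ j ∈ Icc 1 (q ^ 2), |(i : ℝ) - j| ≤
      2 * (q : ℝ) ^ 2 * |1 / (((q : ℝ) ^ 2 + i) / (2 * (q : ℝ) ^ 2)) -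
        1 / (((q : ℝ) ^ 2 + j) / (2 * (q : ℝ) ^ 2))| := fun i hi j hj =>
    abs_sub_le_mul_abs_one_div_sub_one_div (by positivity)
      (by exact_mod_cast (mem_Icc.mp hi).2) (by exact_mod_cast (mem_Icc.mp hj).2)
  have hcard : ((liftedGrid n A B).card : ℝ) ≤ (q : ℝ) ^ (n + 2) := by
    have hA : A.card ≤ q := hA ▸ card_image_le.trans_eq (Nat.card_Icc 1 q)
    have hB : B.card ≤ q ^ 2 := hB ▸ card_image_le.trans_eq (Nat.card_Icc 1 (q ^ 2))
    exact_mod_cast (card_liftedGrid_le n A B).trans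
      ((Nat.mul_le_mul (Nat.pow_le_pow_left hA n) hB).trans_eq (pow_add q n 2).symm)
  calc _ ≤ (1 / (q : ℝ) ^ (2 * (n + 1) + 2)) *
        ((q : ℝ) ^ (n + 2) * ((2 ^ s * (q : ℝ) ^ (n + 2)) * Z)) := by
        gcongr
        refine (sum_filter_castSucc_eq_last_ne_rpow_neg_le h1 (by positivity) hsep _
          fun p hp => exists_last_eq_of_mem_liftedGrid (hB ▸ hp)).trans ?_
        gcongr
        exact two_mul_sq_rpow_le hq1 (by push_cast; linarith)
    _ = 2 ^ s * Z := by
        field_simp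
        ring

/-- The part of the discrete `s`-energy of `F` coming from pairs agreeing in the
first `d-1` coordinates is bounded: for `d = n+1 ≥ 3`, `1 < s < 2`,
`d/2 < s < (d+1)/2`, there is `C = C(d,s)` with
`q^{-2d-2} ∑_{(p,p') ∈ 𝓕} |p_d - p'_d|^{-s} ≤ C`, where
`𝓕 = {(p,p') ∈ F × F : p_j = p'_j for j < d, p_d ≠ p'_d}`. -/
theorem stmt17 (n : ℕ) (hn : 2 ≤ n) (s : ℝ) (h1 : 1 < s) (h2 : s < 2)
    (hs1 : ((n : ℝ) + 1) / 2 < s) (hs2 : s < ((n : ℝ) + 2) / 2) :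
    ∃ C : ℝ, 0 < C ∧ ∀ q : ℕ, 1 ≤ q →
      ∀ A B : Finset ℝ,
        A = (Finset.Icc 1 q).image (fun i : ℕ => ((q : ℝ) + i) / (2 * q)) →
        B = (Finset.Icc 1 (q ^ 2)).image (fun i : ℕ => ((q : ℝ) ^ 2 + i) / (2 * (q : ℝ) ^ 2)) →
        ∀ F : Finset (EuclideanSpace ℝ (Fin (n + 1))),
          F = ((Fintype.piFinset fun _ : Fin n => -A) ×ˢ B).image
              (fun mb => WithLp.toLp 2 (Fin.snoc (fun j => -(mb.1 j) / mb.2) (1 / mb.2) : Fin (n + 1) → ℝ)) →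
          (1 / (q : ℝ) ^ (2 * (n + 1) + 2)) *
              ∑ pp ∈ (F ×ˢ F).filter
                  (fun pp => (∀ j : Fin n, pp.1 (Fin.castSucc j) = pp.2 (Fin.castSucc j)) ∧
                    pp.1 (Fin.last n) ≠ pp.2 (Fin.last n)),
                |pp.1 (Fin.last n) - pp.2 (Fin.last n)| ^ (-s) ≤ C :=
  stmt17_general n s h1 hs2
end
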